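/- Type preservation for the value semantics of a simplified Cogent fragment: if Γ ⊢ e : τ (in the empty kind context), V : Γ (each variable binding in V has the type declared in Γ), and V ⊢ e ⇓ v (big-step value-semantics evaluation), then v : τ. -/

import Mathlib

/-- Permissions: Discardable, Shareable, Escapable. -/
inductive Perm | D | S | E
deriving DecidableEq

abbrev Kind := Set Perm

/-- Types: primitives, unit, variants (indexed by constructor number; `none`
    marks a removed alternative), and records with possibly-taken fields
    (`true` = taken). -/
inductive Ty
  | prim
  | unit
  | variant (ts : List (Option Ty))
  | record (fs : List (Ty × Bool))

/-- The kinding judgement for closed types. -/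
inductive Kinding : Ty → Kind → Prop
  | prim : Kinding .prim κ
  | unit : Kinding .unit κ
  | variant : (∀ t ∈ ts, ∀ τ, t = some τ → Kinding τ κ) → Kinding (.variant ts) κ
  | record : (∀ p ∈ fs, p.2 = false → Kinding p.1 κ) → Kinding (.record fs) κ

/-- Expressions (de Bruijn indices).  `take e₁ k e₂` binds, in `e₂`, the
    record with field k taken and the field value; `caseE e₁ c e₂ e₃` binds the
    payload in e₂ and the residual variant value in the default branch e₃. -/
inductive Expr
  | var (n : ℕ)
  | unit
  | lit (n : ℕ)
  | letE (e₁ e₂ : Expr)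
  | con (c : ℕ) (e : Expr)
  | caseE (e₁ : Expr) (c : ℕ) (e₂ e₃ : Expr)
  | rcd (es : List Expr)
  | take (e₁ : Expr) (k : ℕ) (e₂ : Expr)
  | put (e₁ : Expr) (k : ℕ) (e₂ : Expr)

/-- Values of the value semantics. -/
inductive VVal
  | lit (n : ℕ)
  | unit
  | con (c : ℕ) (v : VVal)
  | rcd (vs : List VVal)

abbrev Ctx := List (Option Ty)

/-- Context weakening: dropped bindings must be discardable. -/
inductive Weaken : Ctx → Ctx → Prop
  | nil : Weaken [] []
  | keep : Weaken Γ Γ' → Weaken (o :: Γ) (o :: Γ')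
  | drop : Kinding τ κ → Perm.D ∈ κ → Weaken Γ Γ' →
      Weaken (some τ :: Γ) (none :: Γ')

/-- Context splitting: duplicated bindings must be shareable. -/
inductive Split : Ctx → Ctx → Ctx → Prop
  | nil : Split [] [] []
  | none : Split Γ Γ₁ Γ₂ → Split (none :: Γ) (none :: Γ₁) (none :: Γ₂)
  | left : Split Γ Γ₁ Γ₂ → Split (some τ :: Γ) (some τ :: Γ₁) (none :: Γ₂)
  | right : Split Γ Γ₁ Γ₂ → Split (some τ :: Γ) (none :: Γ₁) (some τ :: Γ₂)
  | both : Kinding τ κ → Perm.S ∈ κ → Split Γ Γ₁ Γ₂ →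
      Split (some τ :: Γ) (some τ :: Γ₁) (some τ :: Γ₂)

/-- A context containing exactly one binding, at position n. -/
def OnlyAt (Γ : Ctx) (n : ℕ) (τ : Ty) : Prop :=
  Γ[n]? = some (some τ) ∧ ∀ m, m ≠ n → ∀ τ', Γ[m]? = some (some τ') → False

/-- A context containing no bindings. -/
def AllNone (Γ : Ctx) : Prop := ∀ o ∈ Γ, o = none

mutual
/-- The linear typing judgement Γ ⊢ e : τ. -/
inductive Typing : Ctx → Expr → Ty → Prop
  | var : Weaken Γ Γ' → OnlyAt Γ' n τ → Typing Γ (.var n) τ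
  | unit : Weaken Γ Γ' → AllNone Γ' → Typing Γ .unit .unit
  | lit : Weaken Γ Γ' → AllNone Γ' → Typing Γ (.lit n) .prim
  | letE : Split Γ Γ₁ Γ₂ → Typing Γ₁ e₁ ρ → Typing (some ρ :: Γ₂) e₂ τ →
      Typing Γ (.letE e₁ e₂) τ
  | con : ts[c]? = some (some τ) → Typing Γ e τ →
      Typing Γ (.con c e) (.variant ts)
  | caseE : Split Γ Γ₁ Γ₂ → Typing Γ₁ e₁ (.variant ts) →
      ts[c]? = some (some ρ) →
      Typing (some ρ :: Γ₂) e₂ τ →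
      Typing (some (.variant (ts.set c none)) :: Γ₂) e₃ τ →
      Typing Γ (.caseE e₁ c e₂ e₃) τ
  | rcd : TypingList Γ es τs → Typing Γ (.rcd es) (.record (τs.map ((·, false))))
  | take : Split Γ Γ₁ Γ₂ → Typing Γ₁ e₁ (.record fs) →
      fs[k]? = some (ρ, false) →
      Typing (some (.record (fs.set k (ρ, true))) :: some ρ :: Γ₂) e₂ τ →
      Typing Γ (.take e₁ k e₂) τ
  | put : Split Γ Γ₁ Γ₂ → Typing Γ₁ e₁ (.record fs) →
      fs[k]? = some (ρ, true) → Typing Γ₂ e₂ ρ →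
      Typing Γ (.put e₁ k e₂) (.record (fs.set k (ρ, false)))

/-- Typing of lists of expressions (for record construction). -/
inductive TypingList : Ctx → List Expr → List Ty → Prop
  | nil : Weaken Γ Γ' → AllNone Γ' → TypingList Γ [] []
  | cons : Split Γ Γ₁ Γ₂ → Typing Γ₁ e τ → TypingList Γ₂ es τs →
      TypingList Γ (e :: es) (τ :: τs)
end

mutual
/-- Value typing v : τ. -/
inductive VTy : VVal → Ty → Prop
  | lit : VTy (.lit n) .prim
  | unit : VTy .unit .unit
  | con : ts[c]? = some (some τ) → VTy v τ → VTy (.con c v) (.variant ts)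
  | rcd : VTyFields vs fs → VTy (.rcd vs) (.record fs)

/-- Field-wise value typing; taken fields are unconstrained. -/
inductive VTyFields : List VVal → List (Ty × Bool) → Prop
  | nil : VTyFields [] []
  | cons : VTy v τ → VTyFields vs fs → VTyFields (v :: vs) ((τ, false) :: fs)
  | taken : VTyFields vs fs → VTyFields (v :: vs) ((τ, true) :: fs)
end

mutual
/-- Big-step value semantics V ⊢ e ⇓ v. -/
inductive Eval : List VVal → Expr → VVal → Prop
  | var : V[n]? = some v → Eval V (.var n) v
  | unit : Eval V .unit .unit
  | lit : Eval V (.lit n) (.lit n)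
  | letE : Eval V e₁ v₁ → Eval (v₁ :: V) e₂ v → Eval V (.letE e₁ e₂) v
  | con : Eval V e v → Eval V (.con c e) (.con c v)
  | caseMatch : Eval V e₁ (.con c v') → Eval (v' :: V) e₂ v →
      Eval V (.caseE e₁ c e₂ e₃) v
  | caseElse : Eval V e₁ (.con b v') → b ≠ c → Eval (.con b v' :: V) e₃ v →
      Eval V (.caseE e₁ c e₂ e₃) v
  | rcd : EvalList V es vs → Eval V (.rcd es) (.rcd vs)
  | take : Eval V e₁ (.rcd vs) → vs[k]? = some vk →
      Eval (.rcd vs :: vk :: V) e₂ v → Eval V (.take e₁ k e₂) v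
  | put : Eval V e₁ (.rcd vs) → Eval V e₂ vk →
      Eval V (.put e₁ k e₂) (.rcd (vs.set k vk))

inductive EvalList : List VVal → List Expr → List VVal → Prop
  | nil : EvalList V [] []
  | cons : Eval V e v → EvalList V es vs → EvalList V (e :: es) (v :: vs)
end

/-- An environment conforms to a context when each bound variable has a value
    of the declared type. -/
def EnvTy (V : List VVal) (Γ : Ctx) : Prop :=
  ∀ (n : ℕ) τ, Γ[n]? = some (some τ) → ∃ v, V[n]? = some v ∧ VTy v τ

/-!
Induction on the evaluation derivation, inverting the typing derivation at each step. Weakening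
and splitting only forget bindings, so an environment conforming to a context conforms to every
part of it; and replacing a record field by a taken one, or filling a taken field with a value of
its type, keeps a record value well typed.
-/

theorem Weaken.getElem?_of_getElem? {Γ Γ' : Ctx} (h : Weaken Γ Γ') {n : ℕ} {τ : Ty}
    (hn : Γ'[n]? = some (some τ)) : Γ[n]? = some (some τ) := by
  induction h generalizing n <;> cases n <;> simp_all

theorem Split.getElem?_of_getElem?_left {Γ Γ₁ Γ₂ : Ctx} (h : Split Γ Γ₁ Γ₂) {n : ℕ} {τ : Ty}
    (hn : Γ₁[n]? = some (some τ)) : Γ[n]? = some (some τ) := by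
  induction h generalizing n <;> cases n <;> simp_all

theorem Split.getElem?_of_getElem?_right {Γ Γ₁ Γ₂ : Ctx} (h : Split Γ Γ₁ Γ₂) {n : ℕ} {τ : Ty}
    (hn : Γ₂[n]? = some (some τ)) : Γ[n]? = some (some τ) := by
  induction h generalizing n <;> cases n <;> simp_all

namespace EnvTy

variable {V : List VVal} {Γ Γ₁ Γ₂ : Ctx}

theorem weaken (he : EnvTy V Γ) (h : Weaken Γ Γ₁) : EnvTy V Γ₁ :=
  fun n τ hn => he n τ (h.getElem?_of_getElem? hn)

theorem split_left (he : EnvTy V Γ) (h : Split Γ Γ₁ Γ₂) : EnvTy V Γ₁ :=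
  fun n τ hn => he n τ (h.getElem?_of_getElem?_left hn)

theorem split_right (he : EnvTy V Γ) (h : Split Γ Γ₁ Γ₂) : EnvTy V Γ₂ :=
  fun n τ hn => he n τ (h.getElem?_of_getElem?_right hn)

theorem cons (he : EnvTy V Γ) {v : VVal} {τ : Ty} (hv : VTy v τ) :
    EnvTy (v :: V) (some τ :: Γ) := by
  rintro (_ | n) τ' hn
  · simp_all
  · exact he n τ' hn

end EnvTy

namespace VTyFields

theorem getElem? {vs : List VVal} {fs : List (Ty × Bool)} (h : VTyFields vs fs) {k : ℕ}
    {ρ : Ty} {vk : VVal} (hf : fs[k]? = some (ρ, false)) (hv : vs[k]? = some vk) :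
    VTy vk ρ := by
  induction vs generalizing fs k with
  | nil => cases h; simp at hf
  | cons v vs ih =>
    cases k with
    | zero => cases h <;> simp_all
    | succ k => cases h with
      | cons _ hrest | taken hrest => exact ih hrest hf hv

theorem set_taken {vs : List VVal} {fs : List (Ty × Bool)} (h : VTyFields vs fs) (k : ℕ)
    (ρ : Ty) : VTyFields vs (fs.set k (ρ, true)) := by
  induction vs generalizing fs k with
  | nil => cases h; exact .nil
  | cons v vs ih =>
    cases h with
    | cons hv hrest => cases k with
      | zero => exact .taken hrest
      | succ k => exact .cons hv (ih hrest k)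
    | taken hrest => cases k with
      | zero => exact .taken hrest
      | succ k => exact .taken (ih hrest k)

theorem set_untaken {vs : List VVal} {fs : List (Ty × Bool)} (h : VTyFields vs fs) (k : ℕ)
    {ρ : Ty} {vk : VVal} (hvk : VTy vk ρ) : VTyFields (vs.set k vk) (fs.set k (ρ, false)) := by
  induction vs generalizing fs k with
  | nil => cases h; exact .nil
  | cons v vs ih =>
    cases h with
    | cons hv hrest => cases k with
      | zero => exact .cons hvk hrest
      | succ k => exact .cons hv (ih hrest k)
    | taken hrest => cases k with
      | zero => exact .cons hvk hrest
      | succ k => exact .taken (ih hrest k)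

end VTyFields

theorem VTy.con_set_none {b c : ℕ} {v : VVal} {ts : List (Option Ty)}
    (h : VTy (.con b v) (.variant ts)) (hbc : b ≠ c) :
    VTy (.con b v) (.variant (ts.set c none)) := by
  cases h with
  | con hb hv => exact .con (by rwa [List.getElem?_set_ne hbc.symm]) hv

/-- Type preservation for the value semantics. -/
theorem value_preservation {Γ : Ctx} {e : Expr} {τ : Ty} {V : List VVal} {v : VVal}
    (ht : Typing Γ e τ) (henv : EnvTy V Γ) (hev : Eval V e v) : VTy v τ := by
  induction hev using Eval.rec
    (motive_2 := fun V es vs _ => ∀ {Γ τs}, TypingList Γ es τs → EnvTy V Γ →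
      VTyFields vs (τs.map ((·, false)))) generalizing Γ τ with
  | var hv =>
    cases ht with | var hw hn
    obtain ⟨v', hv', hty⟩ := henv.weaken hw _ _ hn.1
    exact Option.some_injective _ (hv.symm.trans hv') ▸ hty
  | unit => cases ht; exact .unit
  | lit => cases ht; exact .lit
  | letE _ _ ih₁ ih₂ =>
    cases ht with | letE hs t₁ t₂
    exact ih₂ t₂ ((henv.split_right hs).cons (ih₁ t₁ (henv.split_left hs)))
  | con _ ih =>
    cases ht with | con hc t
    exact .con hc (ih t henv)
  | caseMatch _ _ ih₁ ih₂ =>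
    cases ht with | caseE hs t₁ hc t₂ _
    cases ih₁ t₁ (henv.split_left hs) with | con hc' hv
    cases hc.symm.trans hc'
    exact ih₂ t₂ ((henv.split_right hs).cons hv)
  | caseElse _ hbc _ ih₁ ih₃ =>
    cases ht with | caseE hs t₁ _ _ t₃
    exact ih₃ t₃ ((henv.split_right hs).cons ((ih₁ t₁ (henv.split_left hs)).con_set_none hbc))
  | rcd _ ih =>
    cases ht with | rcd tl
    exact .rcd (ih tl henv)
  | take _ hk _ ih₁ ih₂ =>
    cases ht with | take hs t₁ hf t₂
    cases ih₁ t₁ (henv.split_left hs) with | rcd hfs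
    exact ih₂ t₂ (((henv.split_right hs).cons (hfs.getElem? hf hk)).cons
      (.rcd (hfs.set_taken _ _)))
  | put _ _ ih₁ ih₂ =>
    cases ht with | put hs t₁ _ t₂
    cases ih₁ t₁ (henv.split_left hs) with | rcd hfs
    exact .rcd (hfs.set_untaken _ (ih₂ t₂ (henv.split_right hs)))
  | nil => cases ‹TypingList _ [] _›; exact .nil
  | cons _ _ ih₁ ih₂ =>
    rename_i htl henv'
    cases htl with | cons hs t₁ tl
    exact .cons (ih₁ t₁ (henv'.split_left hs)) (ih₂ tl (henv'.split_right hs))
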